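/- arXiv:1911.00875 — 3 statements merged into one kernel-verified Lean document; each statement's English description precedes it below -/
import Mathlib

section
/- Let K ⊆ E ⊆ F ⊆ L be field extensions with L/K of finite transcendence degree, and suppose χ_F, χ_E ∈ ℚ[t] are polynomials with χ_F(r) = trdeg_K F_r and χ_E(r) = trdeg_K E_r for all large r, where F_r = F ∩ L_r and E_r = E ∩ L_r for an ascending exhaustive chain (L_r) of intermediate fields of L/K. If χ_F = χ_E, then F is algebraic over E. -/
/-!
Choose `r ≥ N` with `x ∈ L_r`. Then `E_r ⊆ F_r` have the same finite transcendence degree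
over `K`, so by additivity of transcendence degree in the tower `K ⊆ E_r ⊆ F_r` the extension
`F_r / E_r` has transcendence degree `0`, i.e. is algebraic; hence `x` is algebraic over
`E_r ⊆ E`.
-/

set_option synthInstance.maxHeartbeats 1000000

/-- The transcendence degree of `L` over `K`: the supremum of the cardinalities of
subsets of `L` that are algebraically independent over `K`. -/
noncomputable def trdeg (K L : Type*) [CommRing K] [CommRing L] [Algebra K L] : Cardinal :=
  ⨆ s : {s : Set L // AlgebraicIndependent K ((↑) : s → L)}, Cardinal.mk s.1

universe u v

open Cardinal Filter

theorem trdeg_eq_algebra_trdeg (K L : Type*) [CommRing K] [CommRing L] [Algebra K L] :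
    trdeg K L = Algebra.trdeg K L :=
  rfl

theorem Algebra.isAlgebraic_of_trdeg_eq_of_lt_aleph0 {R : Type u} {S A : Type v}
    [CommRing R] [Nontrivial R] [CommRing S] [CommRing A] [NoZeroDivisors A]
    [Algebra R S] [Algebra R A] [Algebra S A] [FaithfulSMul R S] [FaithfulSMul S A]
    [IsScalarTower R S A] (hfin : Algebra.trdeg R A < ℵ₀)
    (h : Algebra.trdeg R S = Algebra.trdeg R A) : Algebra.IsAlgebraic S A := by
  rw [← trdeg_eq_zero_iff]
  have hadd := trdeg_add_eq R S (A := A)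
  rw [h] at hadd
  exact (add_eq_left_iff.1 hadd).resolve_left
    fun hle => hfin.not_ge ((le_max_left _ _).trans hle)

namespace IntermediateField

variable {K L : Type*} [Field K] [Field L] [Algebra K L]

theorem isAlgebraic_of_le_of_trdeg_eq {M M' : IntermediateField K L} (hle : M ≤ M')
    (hfin : Algebra.trdeg K M' < ℵ₀) (h : Algebra.trdeg K M = Algebra.trdeg K M')
    {x : L} (hx : x ∈ M') : IsAlgebraic M x := by
  -- instance search does not find this tower unaided
  have := isScalarTower (R := K) (S := extendScalars hle)
  have : Algebra.IsAlgebraic M (extendScalars hle) :=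
    Algebra.isAlgebraic_of_trdeg_eq_of_lt_aleph0 (R := K) (A := extendScalars hle) hfin h
  exact isAlgebraic_iff.1 (Algebra.IsAlgebraic.isAlgebraic (⟨x, hx⟩ : extendScalars hle))

theorem eventually_mem_of_monotone_of_iSup_eq_top {Lr : ℕ → IntermediateField K L}
    (hmono : Monotone Lr) (hsup : ⨆ r, Lr r = ⊤) (x : L) : ∀ᶠ r in atTop, x ∈ Lr r := by
  have hx : x ∈ ⨆ r, Lr r := hsup ▸ mem_top
  rw [← SetLike.mem_coe, coe_iSup_of_directed hmono.directed_le, Set.mem_iUnion] at hx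
  obtain ⟨r, hr⟩ := hx
  exact eventually_atTop.2 ⟨r, fun s hs => hmono hs hr⟩

end IntermediateField

/-- let `K ⊆ E ⊆ F ⊆ L` with `L/K` of finite transcendence degree,
`(L_r)` an ascending exhaustive chain of intermediate fields of `L/K`, and suppose
`χ_F, χ_E ∈ ℚ[t]` satisfy `χ_F(r) = trdeg_K (F ∩ L_r)` and `χ_E(r) = trdeg_K (E ∩ L_r)`
for all large `r`. If `χ_F = χ_E`, then `F` is algebraic over `E`. -/
theorem stmt14 (K L : Type*) [Field K] [Field L] [Algebra K L]
    (hfin : trdeg K L < Cardinal.aleph0)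
    (E F : IntermediateField K L) (hEF : E ≤ F)
    (Lr : ℕ → IntermediateField K L) (hmono : Monotone Lr)
    (hsup : (⨆ r, Lr r) = ⊤)
    (χF χE : Polynomial ℚ) (N : ℕ)
    (hF : ∀ r : ℕ, N ≤ r → χF.eval (r : ℚ) = ((trdeg K ↥(F ⊓ Lr r)).toNat : ℚ))
    (hE : ∀ r : ℕ, N ≤ r → χE.eval (r : ℚ) = ((trdeg K ↥(E ⊓ Lr r)).toNat : ℚ))
    (heq : χF = χE) :
    ∀ x : L, x ∈ F → IsAlgebraic E x := by
  simp only [trdeg_eq_algebra_trdeg] at hfin hF hE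
  intro x hxF
  obtain ⟨r, hNr, hxr⟩ := ((eventually_ge_atTop N).and
    (IntermediateField.eventually_mem_of_monotone_of_iSup_eq_top hmono hsup x)).exists
  have hfin_of (M : IntermediateField K L) : Algebra.trdeg K M < ℵ₀ :=
    (trdeg_le_of_injective M.val M.val.injective).trans_lt hfin
  have htrdeg : Algebra.trdeg K ↥(E ⊓ Lr r) = Algebra.trdeg K ↥(F ⊓ Lr r) := by
    refine (toNat_inj_of_lt_aleph0 (hfin_of _) (hfin_of _)).1 ?_
    exact_mod_cast (hE r hNr).symm.trans (heq ▸ hF r hNr)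
  have hx_alg : IsAlgebraic ↥(E ⊓ Lr r) x :=
    IntermediateField.isAlgebraic_of_le_of_trdeg_eq (inf_le_inf_right _ hEF) (hfin_of _)
      htrdeg ⟨hxF, hxr⟩
  exact hx_alg.tower_top_of_subalgebra_le (inf_le_left : E ⊓ Lr r ≤ E)
end

section
/- Let g ∈ ℚ[t] be a numerical polynomial of degree at most d, written g(t) = ∑_{i=0}^{d} a_i C(t+i,i) with a_i ∈ ℤ, and let (h_p)_{p} be polynomials h_p(t) = ∑_{i=0}^{d} a_i^{(p)} C(t+i,i), a_i^{(p)} ∈ ℤ, arising as partial sums along a chain, such that a_d^{(0)} > a_d^{(1)} > ⋯ > a_d^{(p)} is a strictly decreasing sequence of integers and h_0 − h_p ≤ g (eventual pointwise inequality of values). Then p ≤ a_d, where a_d is the coefficient of C(t+d,d) in g. -/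
/-- The polynomial `C(t+i, i) = (t+1)(t+2)⋯(t+i)/i!` in `ℚ[t]`. -/
noncomputable def binomialPoly (i : ℕ) : Polynomial ℚ :=
  Polynomial.C (1 / (i.factorial : ℚ)) * (ascPochhammer ℚ i).comp (Polynomial.X + 1)

open Polynomial in
lemma binomialPoly_natDegree (i : ℕ) : (binomialPoly i).natDegree = i := by
  have hm : ((ascPochhammer ℚ i).comp (X + 1)).Monic := by
    have := (monic_ascPochhammer ℚ (n := i)).comp_X_add_C (1 : ℚ)
    simpa using this
  have hdeg : ((ascPochhammer ℚ i).comp (X + 1)).natDegree = i := by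
    rw [natDegree_comp]
    rw [ascPochhammer_natDegree, show (X + 1 : Polynomial ℚ) = X + C 1 by rw [Polynomial.C_1], natDegree_X_add_C, mul_one]
  rw [binomialPoly, natDegree_C_mul (by positivity), hdeg]

open Polynomial in
lemma binomialPoly_coeff_self (i : ℕ) : (binomialPoly i).coeff i = 1 / (i.factorial : ℚ) := by
  have hm : ((ascPochhammer ℚ i).comp (X + 1)).Monic := by
    have := (monic_ascPochhammer ℚ (n := i)).comp_X_add_C (1 : ℚ)
    simpa using this
  have hdeg : ((ascPochhammer ℚ i).comp (X + 1)).natDegree = i := by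
    rw [natDegree_comp]
    rw [ascPochhammer_natDegree, show (X + 1 : Polynomial ℚ) = X + C 1 by rw [Polynomial.C_1], natDegree_X_add_C, mul_one]
  rw [binomialPoly, coeff_C_mul]
  have : ((ascPochhammer ℚ i).comp (X + 1)).coeff i = 1 := by
    have := hm.leadingCoeff
    rwa [leadingCoeff, hdeg] at this
  rw [this, mul_one]

open Polynomial Filter

/-- let `g(t) = ∑_{i≤d} a_i C(t+i,i)` with `a_i ∈ ℤ`, and
`h_q(t) = ∑_{i≤d} c_{q,i} C(t+i,i)` with `c_{q,i} ∈ ℤ`. If the top coefficients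
`c_{0,d} > c_{1,d} > ⋯ > c_{p,d}` strictly decrease and `h_0 - h_p ≤ g` eventually,
then `p ≤ a_d`. -/
theorem stmt15 (d : ℕ) (a : ℕ → ℤ) (c : ℕ → ℕ → ℤ) (p : ℕ)
    (hdec : ∀ q : ℕ, q < p → c (q + 1) d < c q d)
    (hle : ∃ N : ℤ, ∀ r : ℤ, N ≤ r →
      ((∑ i ∈ Finset.range (d + 1), (c 0 i : ℚ) • binomialPoly i) -
        (∑ i ∈ Finset.range (d + 1), (c p i : ℚ) • binomialPoly i)).eval (r : ℚ) ≤
      (∑ i ∈ Finset.range (d + 1), (a i : ℚ) • binomialPoly i).eval (r : ℚ)) :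
    (p : ℤ) ≤ a d := by
  obtain ⟨N, hN⟩ := hle
  -- step 1: p ≤ c 0 d - c p d
  have hchain : ∀ q : ℕ, q ≤ p → (q : ℤ) ≤ c 0 d - c q d := by
    intro q hq
    induction q with
    | zero => simp
    | succ n ih =>
      have h1 := ih (Nat.le_of_succ_le hq)
      have h2 := hdec n (Nat.lt_of_succ_le hq)
      push_cast
      omega
  have hp1 : (p : ℤ) ≤ c 0 d - c p d := hchain p le_rfl
  -- the difference polynomial
  set F : Polynomial ℚ :=
    ∑ i ∈ Finset.range (d + 1), ((a i : ℚ) - (c 0 i : ℚ) + (c p i : ℚ)) • binomialPoly i with hF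
  have hFeval : ∀ r : ℤ, N ≤ r → 0 ≤ F.eval (r : ℚ) := by
    intro r hr
    have := hN r hr
    simp only [hF, sub_smul, add_smul, Finset.sum_add_distrib, Finset.sum_sub_distrib,
      eval_add, eval_sub] at this ⊢
    linarith
  -- coefficient of F at d
  have hcoeff : F.coeff d = ((a d : ℚ) - (c 0 d : ℚ) + (c p d : ℚ)) / d.factorial := by
    rw [hF, finset_sum_coeff]
    rw [Finset.sum_eq_single d]
    · rw [coeff_smul, binomialPoly_coeff_self]
      simp [smul_eq_mul, div_eq_mul_inv, one_div]
    · intro i hi hne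
      rw [coeff_smul, coeff_eq_zero_of_natDegree_lt, smul_zero]
      rw [binomialPoly_natDegree]
      exact lt_of_le_of_ne (Nat.lt_succ_iff.mp (Finset.mem_range.mp hi)) hne
    · intro h
      exact absurd (Finset.self_mem_range_succ d) h
  have hdegF : F.natDegree ≤ d := by
    refine Polynomial.natDegree_sum_le_of_forall_le _ _ (fun i hi => ?_)
    refine le_trans (Polynomial.natDegree_smul_le _ _) ?_
    rw [binomialPoly_natDegree]
    exact Nat.lt_succ_iff.mp (Finset.mem_range.mp hi)
  -- step 2: c 0 d - c p d ≤ a d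
  have hkey : (0 : ℚ) ≤ (a d : ℚ) - (c 0 d : ℚ) + (c p d : ℚ) := by
    by_contra hneg
    push_neg at hneg
    have hcne : F.coeff d ≠ 0 := by
      rw [hcoeff]
      have : (0 : ℚ) < d.factorial := by positivity
      intro h
      rw [_root_.div_eq_zero_iff] at h
      rcases h with h | h
      · linarith
      · linarith
    have hndF : F.natDegree = d := le_antisymm hdegF (le_natDegree_of_ne_zero hcne)
    have hFne : F ≠ 0 := fun h => hcne (by simp [h])
    have hlc : F.leadingCoeff < 0 := by
      rw [leadingCoeff, hndF, hcoeff]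
      have : (0 : ℚ) < d.factorial := by positivity
      exact div_neg_of_neg_of_pos hneg this
    rcases Nat.eq_zero_or_pos d with hd0 | hdpos
    · -- d = 0 : F is a constant
      have := hFeval N le_rfl
      have hF0 : F.eval (N : ℚ) = F.coeff 0 := by
        obtain ⟨x, hx⟩ := Polynomial.natDegree_eq_zero.mp (hd0 ▸ hndF)
        rw [← hx]; simp
      rw [hF0] at this
      rw [leadingCoeff, hndF, hd0] at hlc
      linarith
    · have hdegpos : 0 < F.degree := by
        rw [degree_eq_natDegree hFne, hndF]
        exact_mod_cast hdpos
      have T := Polynomial.tendsto_atBot_of_leadingCoeff_nonpos F hdegpos hlc.le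
      have T2 : Tendsto (fun n : ℤ => F.eval (n : ℚ)) atTop atBot :=
        T.comp tendsto_intCast_atTop_atTop
      have h1 : ∀ᶠ n : ℤ in atTop, F.eval (n : ℚ) < 0 := T2.eventually (eventually_lt_atBot 0)
      have h2 : ∀ᶠ n : ℤ in atTop, N ≤ n := eventually_ge_atTop N
      obtain ⟨r, hr1, hr2⟩ := (h1.and h2).exists
      exact absurd (hFeval r hr2) (not_le.mpr hr1)
  have : (c 0 d : ℚ) - (c p d : ℚ) ≤ (a d : ℚ) := by linarith
  have h2 : c 0 d - c p d ≤ a d := by exact_mod_cast this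
  omega
end

section
/- Let R be a commutative ring with injective endomorphism α, and let (R₁*, α₁) and (R₂*, α₂) be two inversive closures of R. Then there exists a ring isomorphism φ : R₁* → R₂* with φ ∘ α₁ = α₂ ∘ φ and φ(a) = a for all a ∈ R. -/
/-- An inversive closure of a difference ring `(R, α)`: a commutative ring extension
`R* ⊇ R` (via an injective ring homomorphism) together with a ring automorphism
extending `α` such that every element of `R*` is mapped into `R` by some power of
the automorphism. -/
structure InversiveClosure (R : Type*) [CommRing R] (α : R →+* R) where
  /-- the underlying ring of the inversive closure -/
  carrier : Type*
  [commRing : CommRing carrier]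
  /-- the inclusion of `R` -/
  incl : R →+* carrier
  inj : Function.Injective incl
  /-- the automorphism extending `α` -/
  aut : RingAut carrier
  commutes : ∀ a : R, aut (incl a) = incl (α a)
  eventual : ∀ s : carrier, ∃ n : ℕ, (aut ^ n) s ∈ Set.range incl

attribute [instance] InversiveClosure.commRing
section Aux

variable {R : Type*} [CommRing R] {α : R →+* R}

lemma IC.cancel {X : Type*} [CommRing X] (g : RingAut X) (x : X) : g (g⁻¹ x) = x := by
  show (g * g⁻¹) x = x
  rw [mul_inv_cancel]; rfl

lemma IC.pow_commutes (C : InversiveClosure R α) (n : ℕ) (a : R) :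
    (C.aut ^ n) (C.incl a) = C.incl ((α ^ n) a) := by
  induction n generalizing a with
  | zero => rfl
  | succ n ih =>
    have h1 : (C.aut ^ (n+1)) (C.incl a) = (C.aut ^ n) (C.aut (C.incl a)) := by
      rw [pow_succ]; rfl
    rw [h1, C.commutes, ih (α a)]
    congr 1

lemma IC.cancel' {X : Type*} [CommRing X] (g : RingAut X) (x : X) : g⁻¹ (g x) = x := by
  show (g⁻¹ * g) x = x
  rw [inv_mul_cancel]; rfl

end Aux

/-- any two inversive closures of a difference ring `(R, α)` are
isomorphic via a ring isomorphism commuting with the automorphisms and fixing `R`. -/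
theorem stmt18 (R : Type*) [CommRing R] (α : R →+* R) (hα : Function.Injective α)
    (C₁ C₂ : InversiveClosure R α) :
    ∃ φ : C₁.carrier ≃+* C₂.carrier,
      (∀ s : C₁.carrier, φ (C₁.aut s) = C₂.aut (φ s)) ∧
      ∀ a : R, φ (C₁.incl a) = C₂.incl a := by
  classical
  have hev : ∀ s : C₁.carrier, ∃ n : ℕ, ∃ a : R, (C₁.aut ^ n) s = C₁.incl a := by
    intro s
    obtain ⟨n, a, ha⟩ := C₁.eventual s
    exact ⟨n, a, ha.symm⟩
  choose nf af haf using hev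
  set φ0 : C₁.carrier → C₂.carrier :=
    fun s => (C₂.aut ^ nf s)⁻¹ (C₂.incl (af s)) with hφ0
  -- key computation lemma
  have key : ∀ (s : C₁.carrier) (n : ℕ) (a : R), (C₁.aut ^ n) s = C₁.incl a →
      φ0 s = (C₂.aut ^ n)⁻¹ (C₂.incl a) := by
    intro s n a h
    have hinj2 : Function.Injective (C₂.aut ^ (n + nf s)) :=
      (C₂.aut ^ (n + nf s)).injective
    apply hinj2
    have e1 : (C₂.aut ^ (n + nf s)) ((C₂.aut ^ nf s)⁻¹ (C₂.incl (af s)))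
        = C₂.incl ((α ^ n) (af s)) := by
      have : (C₂.aut ^ (n + nf s)) ((C₂.aut ^ nf s)⁻¹ (C₂.incl (af s)))
          = (C₂.aut ^ n) ((C₂.aut ^ nf s) ((C₂.aut ^ nf s)⁻¹ (C₂.incl (af s)))) := by
        rw [pow_add]; rfl
      rw [this, IC.cancel, IC.pow_commutes]
    have e2 : (C₂.aut ^ (n + nf s)) ((C₂.aut ^ n)⁻¹ (C₂.incl a))
        = C₂.incl ((α ^ nf s) a) := by
      have : (C₂.aut ^ (n + nf s)) ((C₂.aut ^ n)⁻¹ (C₂.incl a))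
          = (C₂.aut ^ nf s) ((C₂.aut ^ n) ((C₂.aut ^ n)⁻¹ (C₂.incl a))) := by
        rw [add_comm, pow_add]; rfl
      rw [this, IC.cancel, IC.pow_commutes]
    rw [e1, e2]
    congr 1
    apply C₁.inj
    have f1 : (C₁.aut ^ (n + nf s)) s = C₁.incl ((α ^ n) (af s)) := by
      have : (C₁.aut ^ (n + nf s)) s = (C₁.aut ^ n) ((C₁.aut ^ nf s) s) := by
        rw [pow_add]; rfl
      rw [this, haf, IC.pow_commutes]
    have f2 : (C₁.aut ^ (n + nf s)) s = C₁.incl ((α ^ nf s) a) := by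
      have : (C₁.aut ^ (n + nf s)) s = (C₁.aut ^ nf s) ((C₁.aut ^ n) s) := by
        rw [add_comm, pow_add]; rfl
      rw [this, h, IC.pow_commutes]
    rw [← f1, f2]
  -- φ0 is a ring hom
  have hone : φ0 1 = 1 := by
    have := key 1 0 1 (by simp)
    simpa using this
  have hmul : ∀ s t, φ0 (s * t) = φ0 s * φ0 t := by
    intro s t
    have hs : (C₁.aut ^ (nf s + nf t)) s = C₁.incl ((α ^ nf t) (af s)) := by
      have : (C₁.aut ^ (nf s + nf t)) s = (C₁.aut ^ nf t) ((C₁.aut ^ nf s) s) := by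
        rw [add_comm, pow_add]; rfl
      rw [this, haf, IC.pow_commutes]
    have ht : (C₁.aut ^ (nf s + nf t)) t = C₁.incl ((α ^ nf s) (af t)) := by
      have : (C₁.aut ^ (nf s + nf t)) t = (C₁.aut ^ nf s) ((C₁.aut ^ nf t) t) := by
        rw [pow_add]; rfl
      rw [this, haf, IC.pow_commutes]
    have hst : (C₁.aut ^ (nf s + nf t)) (s * t)
        = C₁.incl ((α ^ nf t) (af s) * (α ^ nf s) (af t)) := by
      rw [map_mul, hs, ht, map_mul]
    rw [key _ _ _ hst, key _ _ _ hs, key _ _ _ ht, map_mul, map_mul]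
  have hadd : ∀ s t, φ0 (s + t) = φ0 s + φ0 t := by
    intro s t
    have hs : (C₁.aut ^ (nf s + nf t)) s = C₁.incl ((α ^ nf t) (af s)) := by
      have : (C₁.aut ^ (nf s + nf t)) s = (C₁.aut ^ nf t) ((C₁.aut ^ nf s) s) := by
        rw [add_comm, pow_add]; rfl
      rw [this, haf, IC.pow_commutes]
    have ht : (C₁.aut ^ (nf s + nf t)) t = C₁.incl ((α ^ nf s) (af t)) := by
      have : (C₁.aut ^ (nf s + nf t)) t = (C₁.aut ^ nf s) ((C₁.aut ^ nf t) t) := by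
        rw [pow_add]; rfl
      rw [this, haf, IC.pow_commutes]
    have hst : (C₁.aut ^ (nf s + nf t)) (s + t)
        = C₁.incl ((α ^ nf t) (af s) + (α ^ nf s) (af t)) := by
      rw [map_add, hs, ht, map_add]
    rw [key _ _ _ hst, key _ _ _ hs, key _ _ _ ht, map_add, map_add]
  -- bijectivity
  have hinjφ : Function.Injective φ0 := by
    intro s t h
    have hs : (C₁.aut ^ (nf s + nf t)) s = C₁.incl ((α ^ nf t) (af s)) := by
      have : (C₁.aut ^ (nf s + nf t)) s = (C₁.aut ^ nf t) ((C₁.aut ^ nf s) s) := by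
        rw [add_comm, pow_add]; rfl
      rw [this, haf, IC.pow_commutes]
    have ht : (C₁.aut ^ (nf s + nf t)) t = C₁.incl ((α ^ nf s) (af t)) := by
      have : (C₁.aut ^ (nf s + nf t)) t = (C₁.aut ^ nf s) ((C₁.aut ^ nf t) t) := by
        rw [pow_add]; rfl
      rw [this, haf, IC.pow_commutes]
    rw [key _ _ _ hs, key _ _ _ ht] at h
    have h2 : C₂.incl ((α ^ nf t) (af s)) = C₂.incl ((α ^ nf s) (af t)) := by
      have := congrArg (C₂.aut ^ (nf s + nf t)) h
      rwa [IC.cancel, IC.cancel] at this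
    have h3 : (α ^ nf t) (af s) = (α ^ nf s) (af t) := C₂.inj h2
    have h4 : (C₁.aut ^ (nf s + nf t)) s = (C₁.aut ^ (nf s + nf t)) t := by
      rw [hs, ht, h3]
    exact (C₁.aut ^ (nf s + nf t)).injective h4
  have hsurjφ : Function.Surjective φ0 := by
    intro t
    obtain ⟨m, b, hb⟩ := C₂.eventual t
    refine ⟨(C₁.aut ^ m)⁻¹ (C₁.incl b), ?_⟩
    have hs : (C₁.aut ^ m) ((C₁.aut ^ m)⁻¹ (C₁.incl b)) = C₁.incl b := IC.cancel _ _
    rw [key _ _ _ hs, hb, IC.cancel']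
  let ψ : C₁.carrier ≃+* C₂.carrier :=
    { Equiv.ofBijective φ0 ⟨hinjφ, hsurjφ⟩ with
      map_mul' := hmul
      map_add' := hadd }
  have hψ : ∀ s, ψ s = φ0 s := fun _ => rfl
  refine ⟨ψ, ?_, ?_⟩
  · intro s
    rw [hψ, hψ]
    have hs : (C₁.aut ^ nf s) (C₁.aut s) = C₁.incl (α (af s)) := by
      have : (C₁.aut ^ nf s) (C₁.aut s) = C₁.aut ((C₁.aut ^ nf s) s) := by
        have hc : C₁.aut ^ nf s * C₁.aut = C₁.aut * C₁.aut ^ nf s :=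
          (Commute.pow_self C₁.aut (nf s)).eq
        show (C₁.aut ^ nf s * C₁.aut) s = (C₁.aut * C₁.aut ^ nf s) s
        rw [hc]
      rw [this, haf, C₁.commutes]
    rw [key _ _ _ hs]
    have : (C₂.aut ^ nf s)⁻¹ (C₂.incl (α (af s)))
        = (C₂.aut ^ nf s)⁻¹ (C₂.aut (C₂.incl (af s))) := by rw [C₂.commutes]
    rw [this]
    have hc : (C₂.aut ^ nf s)⁻¹ * C₂.aut = C₂.aut * (C₂.aut ^ nf s)⁻¹ :=
      ((Commute.pow_self C₂.aut (nf s)).inv_left).eq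
    show ((C₂.aut ^ nf s)⁻¹ * C₂.aut) (C₂.incl (af s))
        = (C₂.aut * (C₂.aut ^ nf s)⁻¹) (C₂.incl (af s))
    rw [hc]
  · intro a
    rw [hψ]
    have h0 : (C₁.aut ^ 0) (C₁.incl a) = C₁.incl a := rfl
    rw [key _ _ _ h0]
    show ((C₂.aut ^ 0)⁻¹) (C₂.incl a) = C₂.incl a
    rw [pow_zero, inv_one]
    rfl
end
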